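/- arXiv:2505.08065 — 4 statements merged into one kernel-verified Lean document; each statement's English description precedes it below -/
import Mathlib

section
/- Let (Ω, F, P) be a probability space, D ≥ 1 an integer, ψ₀ ∈ ℝ^D, and Σ a positive semidefinite D×D real matrix. Let ψ_n : Ω → ℝ^D be a sequence of random vectors such that √n(ψ_n − ψ₀) converges in distribution to N(0, Σ), and let γ_n : Ω → [0, ∞) be random variables converging in probability to a finite constant γ_∞ ≥ 0. Set λ_n* = γ_n/n and ψ̃_n = ψ_n/(1 + λ_n*). Then √n(ψ̃_n − ψ₀) converges in distribution to N(0, Σ). -/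
open MeasureTheory ProbabilityTheory Filter
open scoped Topology

/-- The centered multivariate Gaussian measure `N(0, Σ)` on `ℝ^D` with positive semidefinite
covariance matrix `Σ`, realized as the pushforward of a product of `D` independent standard
Gaussians under multiplication by the positive semidefinite square root of `Σ`. -/
noncomputable def multivariateGaussian {D : ℕ} {S : Matrix (Fin D) (Fin D) ℝ}
    (hS : S.PosSemidef) : Measure (Fin D → ℝ) :=
  Measure.map (fun x => (hS.1.eigenvectorUnitary.1 *
      Matrix.diagonal (RCLike.ofReal ∘ Real.sqrt ∘ hS.1.eigenvalues : Fin D → ℝ) *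
      (star hS.1.eigenvectorUnitary : Matrix (Fin D) (Fin D) ℝ)).mulVec x) (Measure.pi fun _ : Fin D => gaussianReal 0 1)

/-- A sequence of random vectors `X_n : Ω → E` converges in distribution (under `P`) to a
measure `ν` on `E` if the pushforward laws converge weakly, i.e. the integrals of every bounded
continuous function converge. -/
def TendstoInDistribution {Ω E : Type*} [MeasurableSpace Ω] [MeasurableSpace E]
    [TopologicalSpace E] (P : Measure Ω) (X : ℕ → Ω → E) (ν : Measure E) : Prop :=
  ∀ f : BoundedContinuousFunction E ℝ,
    Tendsto (fun n => ∫ ω, f (X n ω) ∂P) atTop (𝓝 (∫ x, f x ∂ν))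

/-- A sequence of random vectors `X_n : Ω → E` converges in probability (under `P`) to the
constant `c` if `P(‖X_n − c‖ > ε) → 0` for every `ε > 0`. -/
def TendstoInProbability {Ω E : Type*} [MeasurableSpace Ω] [NormedAddCommGroup E]
    (P : Measure Ω) (X : ℕ → Ω → E) (c : E) : Prop :=
  ∀ ε : ℝ, 0 < ε → Tendsto (fun n => P {ω | ε < ‖X n ω - c‖}) atTop (𝓝 0)

/-! Put `c = (1 + γ/n)⁻¹`. The rescaled error of the penalized estimator is
`c • (√n (ψ_n − ψ₀) − (γ_n / √n) ψ₀)`, a fixed continuous function of the triple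
`(√n (ψ_n − ψ₀), γ_n, 1/√n)`. By Slutsky's theorem this triple converges in distribution to
`(Z, γ_∞, 0)` with `Z ~ N(0, Σ)`, and by the continuous mapping theorem the error converges to the
value of the function at that point, which is `Z`. -/

instance isProbabilityMeasure_multivariateGaussian {D : ℕ} {S : Matrix (Fin D) (Fin D) ℝ}
    (hS : S.PosSemidef) : IsProbabilityMeasure (multivariateGaussian hS) :=
  Measure.isProbabilityMeasure_map (Continuous.measurable (by fun_prop)).aemeasurable

theorem tendstoInDistribution_iff_tendstoInDistribution_id {Ω E : Type*} [MeasurableSpace Ω]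
    [MeasurableSpace E] [TopologicalSpace E] [OpensMeasurableSpace E]
    (P : Measure Ω) [IsProbabilityMeasure P] {X : ℕ → Ω → E} (hX : ∀ n, AEMeasurable (X n) P)
    (ν : Measure E) [IsProbabilityMeasure ν] :
    _root_.TendstoInDistribution P X ν ↔
      MeasureTheory.TendstoInDistribution X atTop id (fun _ ↦ P) ν := by
  have law_integral (n : ℕ) (f : BoundedContinuousFunction E ℝ) :
      ∫ x, f x ∂(P.map (X n)) = ∫ ω, f (X n ω) ∂P :=
    integral_map (hX n) f.continuous.aestronglyMeasurable
  refine ⟨fun h ↦ ⟨hX, aemeasurable_id,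
    ProbabilityMeasure.tendsto_iff_forall_integral_tendsto.2 fun f ↦ ?_⟩, fun h f ↦ ?_⟩
  · simpa [law_integral] using h f
  · simpa [law_integral] using ProbabilityMeasure.tendsto_iff_forall_integral_tendsto.1 h.tendsto f

theorem TendstoInProbability.tendstoInMeasure {Ω E : Type*} [MeasurableSpace Ω]
    [NormedAddCommGroup E] {P : Measure Ω} {X : ℕ → Ω → E} {c : E}
    (h : TendstoInProbability P X c) : TendstoInMeasure P X atTop (fun _ ↦ c) := by
  refine tendstoInMeasure_iff_norm.2 fun ε hε ↦ ?_
  refine tendsto_of_tendsto_of_tendsto_of_le_of_le tendsto_const_nhds (h (ε / 2) (by positivity))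
    (fun _ ↦ zero_le) fun n ↦ measure_mono fun ω (hω : ε ≤ _) ↦ ?_
  show ε / 2 < _
  linarith

section Ridge

variable {E : Type*} [NormedAddCommGroup E] [NormedSpace ℝ E]

/-- The absolute value makes this continuous everywhere; on `γ ≥ 0` it does not matter. -/
noncomputable def ridgeStatistic (ψ₀ : E) (p : (E × ℝ) × ℝ) : E :=
  (1 + |p.1.2| * p.2 ^ 2)⁻¹ • (p.1.1 - (p.1.2 * p.2) • ψ₀)

theorem continuous_ridgeStatistic (ψ₀ : E) : Continuous (ridgeStatistic ψ₀) := by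
  unfold ridgeStatistic
  refine Continuous.smul (Continuous.inv₀ (by fun_prop) fun p ↦ ?_) (by fun_prop)
  positivity

@[simp]
theorem ridgeStatistic_zero (ψ₀ z : E) (γ : ℝ) : ridgeStatistic ψ₀ ((z, γ), 0) = z := by
  simp [ridgeStatistic]

theorem sqrt_smul_inv_smul_sub_eq_ridgeStatistic (ψ₀ ψ : E) {γ : ℝ} (hγ : 0 ≤ γ) (n : ℕ) :
    √n • ((1 + γ / n)⁻¹ • ψ - ψ₀) = ridgeStatistic ψ₀ ((√n • (ψ - ψ₀), γ), (√n)⁻¹) := by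
  rcases n.eq_zero_or_pos with rfl | hn
  · simp [ridgeStatistic]
  have hsqrt : (√n : ℝ) ^ 2 = n := Real.sq_sqrt n.cast_nonneg
  have hs : (√n : ℝ) ≠ 0 := by positivity
  simp only [ridgeStatistic, abs_of_nonneg hγ, inv_pow, smul_sub, smul_smul]
  generalize √(n : ℝ) = s at hs hsqrt ⊢
  rw [← hsqrt]
  match_scalars
  · ring
  · field_simp
    ring

end Ridge

theorem MeasureTheory.TendstoInDistribution.ridge_shrinkage {Ω Ω' E : Type*}
    [MeasurableSpace Ω] [MeasurableSpace Ω'] [NormedAddCommGroup E] [NormedSpace ℝ E]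
    [MeasurableSpace E] [BorelSpace E] [SecondCountableTopology E]
    {P : Measure Ω} [IsProbabilityMeasure P] {μ : Measure Ω'} [IsProbabilityMeasure μ]
    {ψ : ℕ → Ω → E} {ψ₀ : E} {Z : Ω' → E} {γ : ℕ → Ω → ℝ} {γlim : ℝ}
    (hψ : TendstoInDistribution (fun (n : ℕ) ω ↦ √(n : ℝ) • (ψ n ω - ψ₀)) atTop Z (fun _ ↦ P) μ)
    (hγ : TendstoInMeasure P γ atTop (fun _ ↦ γlim)) (hγ_meas : ∀ n, AEMeasurable (γ n) P)
    (hγ_nonneg : ∀ n ω, 0 ≤ γ n ω) :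
    TendstoInDistribution (fun (n : ℕ) ω ↦ √(n : ℝ) • ((1 + γ n ω / n)⁻¹ • ψ n ω - ψ₀)) atTop Z
      (fun _ ↦ P) μ := by
  have h_inv_sqrt : TendstoInMeasure P (fun (n : ℕ) (_ : Ω) ↦ (√(n : ℝ))⁻¹) atTop (fun _ ↦ 0) :=
    tendstoInMeasure_of_tendsto_ae (fun _ ↦ aestronglyMeasurable_const) <| ae_of_all _ fun _ ↦
      tendsto_inv_atTop_zero.comp <| Real.tendsto_sqrt_atTop.comp tendsto_natCast_atTop_atTop
  have h_joint := (hψ.prodMk_of_tendstoInMeasure_const _ _ _ hγ hγ_meas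
    |>.prodMk_of_tendstoInMeasure_const _ _ _ h_inv_sqrt fun _ ↦ aemeasurable_const)
    |>.continuous_comp (continuous_ridgeStatistic ψ₀)
  convert h_joint using 1
  · ext n ω
    exact sqrt_smul_inv_smul_sub_eq_ridgeStatistic ψ₀ (ψ n ω) (hγ_nonneg n ω) n
  · ext ω
    simp

theorem l2_penalized_estimator_asymptotically_normal_efficient_general
    {Ω : Type*} [MeasurableSpace Ω] (P : Measure Ω) [IsProbabilityMeasure P]
    (D : ℕ) (ψ₀ : Fin D → ℝ)
    (S : Matrix (Fin D) (Fin D) ℝ) (hS : S.PosSemidef)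
    (ψn : ℕ → Ω → Fin D → ℝ) (hψmeas : ∀ n, Measurable (ψn n))
    (γn : ℕ → Ω → ℝ) (hγmeas : ∀ n, Measurable (γn n)) (hγnonneg : ∀ n ω, 0 ≤ γn n ω)
    (γlim : ℝ)
    (hdist : TendstoInDistribution P
      (fun n ω => Real.sqrt n • (ψn n ω - ψ₀)) (multivariateGaussian hS))
    (hγprob : TendstoInProbability P γn γlim) :
    TendstoInDistribution P
      (fun n ω => Real.sqrt n • ((1 + γn n ω / n)⁻¹ • ψn n ω - ψ₀))
      (multivariateGaussian hS) := by
  have hZ := (tendstoInDistribution_iff_tendstoInDistribution_id P (fun n ↦ by fun_prop) _).1 hdist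
  refine (tendstoInDistribution_iff_tendstoInDistribution_id P (fun n ↦ by fun_prop) _).2 ?_
  exact hZ.ridge_shrinkage hγprob.tendstoInMeasure (fun n ↦ (hγmeas n).aemeasurable)
    hγnonneg

/-- Theorem 4.4: if `√n(ψ_n − ψ₀) →d N(0, Σ)` and `γ_n →p γ_∞ ∈ [0, ∞)`, then
with `λ_n* = γ_n/n` and `ψ̃_n = ψ_n/(1 + λ_n*)`, also `√n(ψ̃_n − ψ₀) →d N(0, Σ)`. -/
theorem l2_penalized_estimator_asymptotically_normal_efficient
    {Ω : Type*} [MeasurableSpace Ω] (P : Measure Ω) [IsProbabilityMeasure P]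
    (D : ℕ) (hD : 1 ≤ D) (ψ₀ : Fin D → ℝ)
    (S : Matrix (Fin D) (Fin D) ℝ) (hS : S.PosSemidef)
    (ψn : ℕ → Ω → Fin D → ℝ) (hψmeas : ∀ n, Measurable (ψn n))
    (γn : ℕ → Ω → ℝ) (hγmeas : ∀ n, Measurable (γn n)) (hγnonneg : ∀ n ω, 0 ≤ γn n ω)
    (γlim : ℝ) (hγlim : 0 ≤ γlim)
    (hdist : TendstoInDistribution P
      (fun n ω => Real.sqrt n • (ψn n ω - ψ₀)) (multivariateGaussian hS))
    (hγprob : TendstoInProbability P γn γlim) :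
    TendstoInDistribution P
      (fun n ω => Real.sqrt n • ((1 + γn n ω / n)⁻¹ • ψn n ω - ψ₀))
      (multivariateGaussian hS) :=
  l2_penalized_estimator_asymptotically_normal_efficient_general P D ψ₀ S hS ψn hψmeas γn hγmeas
    hγnonneg γlim hdist hγprob
end

section
/- Let (Ω, F, P) be a probability space, D ≥ 1 an integer, ψ₀ ∈ ℝ^D and σ²₀ ∈ (0, ∞)^D. Let ψ_n : Ω → ℝ^D and σ²_n : Ω → (0, ∞)^D be sequences of random vectors with max_d |ψ_{n,d} − ψ_{0,d}| → 0 in probability and max_d |σ²_{n,d} − σ²_{0,d}| → 0 in probability. Then sup_{λ ≥ 0} |Crit(λ, ψ_n, σ²_n, n) − Crit_∞(λ, ψ₀)| → 0 in probability as n → ∞. -/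
open MeasureTheory ProbabilityTheory Filter Finset
open scoped Topology

/-- The soft-thresholding operator `S_λ : ℝ → ℝ`:
`S_λ(x) = x + λ` if `x < −λ`, `S_λ(x) = 0` if `|x| ≤ λ`, and `S_λ(x) = x − λ` if `x > λ`. -/
noncomputable def softThreshold (lam x : ℝ) : ℝ :=
  if x < -lam then x + lam else if x ≤ lam then 0 else x - lam

/-- `μ_λ(m, s², n)`: the mean of `S_λ(Z)` where `Z ~ N(m, s²/n)`. -/
noncomputable def softThresholdMean (lam m s2 : ℝ) (n : ℕ) : ℝ :=
  ∫ z, softThreshold lam z ∂(gaussianReal m (Real.toNNReal (s2 / n)))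

/-- `σ²_λ(m, s², n)`: the variance of `S_λ(Z)` where `Z ~ N(m, s²/n)`. -/
noncomputable def softThresholdVar (lam m s2 : ℝ) (n : ℕ) : ℝ :=
  (∫ z, softThreshold lam z ^ 2 ∂(gaussianReal m (Real.toNNReal (s2 / n)))) -
    softThresholdMean lam m s2 n ^ 2

/-- The L1 tuning criterion
`Crit(λ, ψ, s², n) = Σ_d [(μ_λ(ψ_d, s²_d, n) − ψ_d)² + σ²_λ(ψ_d, s²_d, n)]`. -/
noncomputable def l1Crit {D : ℕ} (lam : ℝ) (ψ s2 : Fin D → ℝ) (n : ℕ) : ℝ :=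
  ∑ d, ((softThresholdMean lam (ψ d) (s2 d) n - ψ d) ^ 2 + softThresholdVar lam (ψ d) (s2 d) n)

/-- The limiting L1 tuning criterion `Crit_∞(λ, ψ) = Σ_d (S_λ(ψ_d) − ψ_d)²`. -/
noncomputable def l1CritLimit {D : ℕ} (lam : ℝ) (ψ : Fin D → ℝ) : ℝ :=
  ∑ d, (softThreshold lam (ψ d) - ψ d) ^ 2

/-!
For each `λ ≥ 0`, the `d`-th summand of `Crit` is `E (S_λ Z - ψ_d)²` with `Z ~ N(ψ_d, s²_d / n)`
(bias–variance decomposition). Since `S_λ` is `1`-Lipschitz and `|S_λ x - x| ≤ |x|`, the inequality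
`|a² - b²| ≤ (1 + 1/t) (a - b)² + t b²` bounds its distance to `(S_λ ψ₀_d - ψ₀_d)²` by
`(1 + 1/t) (2 s²_d / n + 8 (ψ_d - ψ₀_d)²) + t ψ₀_d²`, uniformly in `λ`. Letting `n → ∞` and
`(ψ, s²) → (ψ₀, σ²₀)`, and then `t → 0`, the supremum over `λ` tends to `0` as a deterministic
function of `(n, ψ, s²)`; convergence in probability of `(ψ_n, σ²_n)` transfers this to the random
supremum.
-/

open scoped NNReal

theorem abs_sq_sub_sq_le (a b : ℝ) {t : ℝ} (ht : 0 < t) :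
    |a ^ 2 - b ^ 2| ≤ (1 + t⁻¹) * (a - b) ^ 2 + t * b ^ 2 := by
  have key : 2 * |a - b| * |b| ≤ t⁻¹ * (a - b) ^ 2 + t * b ^ 2 := by
    have h := mul_nonneg (inv_nonneg.2 ht.le) (sq_nonneg (|a - b| - t * |b|))
    have e : t⁻¹ * (|a - b| - t * |b|) ^ 2
        = t⁻¹ * (a - b) ^ 2 - 2 * |a - b| * |b| + t * b ^ 2 := by
      rw [← sq_abs (a - b), ← sq_abs b]; field_simp; ring
    linarith
  calc |a ^ 2 - b ^ 2| = |(a - b) ^ 2 + 2 * (a - b) * b| := by ring_nf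
    _ ≤ (a - b) ^ 2 + 2 * |a - b| * |b| := by
        refine (abs_add_le _ _).trans ?_
        simp [abs_mul]
    _ ≤ _ := by linarith

theorem sq_integral_sub_add_variance {Ω : Type*} [MeasurableSpace Ω] {μ : Measure Ω}
    [IsProbabilityMeasure μ] {f : Ω → ℝ} (hf : MemLp f 2 μ) (m : ℝ) :
    ((∫ x, f x ∂μ) - m) ^ 2 + ((∫ x, f x ^ 2 ∂μ) - (∫ x, f x ∂μ) ^ 2) = ∫ x, (f x - m) ^ 2 ∂μ := by
  have h1 := variance_eq_sub hf
  have h2 : Var[fun x => f x - m; μ] = _ := variance_eq_sub (hf.sub (memLp_const m))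
  rw [variance_sub_const hf.1, integral_sub (hf.integrable one_le_two) (integrable_const m)] at h2
  simp only [Pi.pow_apply, integral_const, probReal_univ, smul_eq_mul, one_mul] at h1 h2
  linarith

theorem integral_sub_sq_gaussianReal (m : ℝ) (v : ℝ≥0) :
    ∫ z, (z - m) ^ 2 ∂gaussianReal m v = v := by
  simpa [variance_eq_integral measurable_id'.aemeasurable] using
    variance_fun_id_gaussianReal (μ := m) (v := v)

theorem tendsto_zero_of_forall_le_mul_add {α : Type*} {l : Filter α} {f E : α → ℝ} {S : ℝ}
    (hf : ∀ x, 0 ≤ f x) (hE : Tendsto E l (𝓝 0))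
    (hle : ∀ t > 0, ∀ x, f x ≤ (1 + t⁻¹) * E x + t * S) : Tendsto f l (𝓝 0) := by
  refine tendsto_order.2 ⟨fun a ha => Eventually.of_forall fun x => ha.trans_le (hf x),
    fun b hb => ?_⟩
  set t := b / (2 * (|S| + 1))
  have ht : 0 < t := by positivity
  have htS : t * S < b / 2 :=
    calc t * S ≤ t * |S| := by gcongr; exact le_abs_self S
      _ < t * (|S| + 1) := by gcongr; linarith
      _ = b / 2 := by simp only [t]; field_simp
  have hEt : Tendsto (fun x => (1 + t⁻¹) * E x) l (𝓝 0) := by simpa using hE.const_mul (1 + t⁻¹)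
  filter_upwards [hEt.eventually_lt_const (half_pos hb)] with x hx
  linarith [hle t ht x]

theorem TendstoInProbability.prodMk {Ω E F : Type*} [MeasurableSpace Ω] [NormedAddCommGroup E]
    [NormedAddCommGroup F] {P : Measure Ω} {X : ℕ → Ω → E} {Y : ℕ → Ω → F} {a : E} {b : F}
    (hX : TendstoInProbability P X a) (hY : TendstoInProbability P Y b) :
    TendstoInProbability P (fun n ω => (X n ω, Y n ω)) (a, b) := by
  intro ε hε
  have hsum := (hX ε hε).add (hY ε hε)
  rw [add_zero] at hsum
  refine tendsto_of_tendsto_of_tendsto_of_le_of_le tendsto_const_nhds hsum (fun _ => bot_le)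
    fun n => (measure_mono fun ω hω => ?_).trans (measure_union_le _ _)
  simpa [Prod.norm_def, lt_max_iff] using hω

theorem TendstoInProbability.comp_tendsto {Ω E : Type*} [MeasurableSpace Ω]
    [NormedAddCommGroup E] {P : Measure Ω} {X : ℕ → Ω → E} {c : E} {F : ℕ → E → ℝ}
    (hX : TendstoInProbability P X c)
    (hF : Tendsto (Function.uncurry F) (atTop ×ˢ 𝓝 c) (𝓝 0)) :
    TendstoInProbability P (fun n ω => F n (X n ω)) 0 := by
  intro ε hε
  obtain ⟨⟨N, δ⟩, ⟨-, hδ⟩, hNδ⟩ := (atTop_basis.prod Metric.nhds_basis_ball).eventually_iff.1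
    (hF.eventually (Metric.closedBall_mem_nhds 0 hε))
  refine tendsto_of_tendsto_of_tendsto_of_le_of_le' tendsto_const_nhds (hX (δ / 2) (half_pos hδ))
    (Eventually.of_forall fun _ => bot_le) ?_
  filter_upwards [eventually_ge_atTop N] with n hn
  refine measure_mono fun ω hω => ?_
  by_contra hclose
  simp only [Set.mem_ofPred_eq, not_lt, sub_zero, Real.norm_eq_abs] at hω hclose
  have := @hNδ (n, X n ω) ⟨hn, by rw [Metric.mem_ball, dist_eq_norm]; linarith⟩
  rw [Real.dist_eq, sub_zero, Function.uncurry_apply_pair] at this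
  linarith

theorem measurable_softThreshold (lam : ℝ) : Measurable (softThreshold lam) := by
  unfold softThreshold
  exact Measurable.ite (measurableSet_lt measurable_id measurable_const)
    (measurable_id.add_const _)
    (Measurable.ite (measurableSet_le measurable_id measurable_const) measurable_const
      (measurable_id.sub_const _))

section SoftThreshold

variable {lam : ℝ}

theorem softThreshold_zero (hlam : 0 ≤ lam) : softThreshold lam 0 = 0 := by
  simp [softThreshold, hlam]

theorem abs_softThreshold_sub_le (hlam : 0 ≤ lam) (x y : ℝ) :
    |softThreshold lam x - softThreshold lam y| ≤ |x - y| := by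
  unfold softThreshold
  split_ifs <;> rw [abs_le] <;> constructor <;>
    nlinarith [le_abs_self (x - y), neg_abs_le (x - y)]

theorem abs_softThreshold_le (hlam : 0 ≤ lam) (x : ℝ) : |softThreshold lam x| ≤ |x| := by
  simpa [softThreshold_zero hlam] using abs_softThreshold_sub_le hlam x 0

theorem abs_softThreshold_sub_self_le (hlam : 0 ≤ lam) (x : ℝ) :
    |softThreshold lam x - x| ≤ |x| := by
  unfold softThreshold
  split_ifs <;> rw [abs_le] <;> constructor <;> nlinarith [le_abs_self x, neg_abs_le x]

theorem sq_softThreshold_sub_sub_le (hlam : 0 ≤ lam) (z m m₀ : ℝ) :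
    (softThreshold lam z - m - (softThreshold lam m₀ - m₀)) ^ 2
      ≤ 2 * (z - m) ^ 2 + 8 * (m - m₀) ^ 2 := by
  have h : |softThreshold lam z - m - (softThreshold lam m₀ - m₀)| ≤ |z - m| + 2 * |m - m₀| :=
    calc _ = |(softThreshold lam z - softThreshold lam m₀) - (m - m₀)| := by ring_nf
      _ ≤ |z - m₀| + |m - m₀| :=
        (abs_sub _ _).trans (add_le_add_left (abs_softThreshold_sub_le hlam z m₀) _)
      _ ≤ |z - m| + 2 * |m - m₀| := by linarith [abs_sub_le z m m₀]
  calc _ = |softThreshold lam z - m - (softThreshold lam m₀ - m₀)| ^ 2 := (sq_abs _).symm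
    _ ≤ (|z - m| + 2 * |m - m₀|) ^ 2 := by gcongr
    _ ≤ 2 * (z - m) ^ 2 + 8 * (m - m₀) ^ 2 := by
      nlinarith [sq_abs (z - m), sq_abs (m - m₀), sq_nonneg (|z - m| - 2 * |m - m₀|)]

theorem memLp_two_softThreshold {γ : Measure ℝ} (hγ : MemLp id 2 γ) (hlam : 0 ≤ lam) :
    MemLp (softThreshold lam) 2 γ :=
  hγ.of_le (measurable_softThreshold lam).aestronglyMeasurable
    (ae_of_all _ fun z => by simpa [Real.norm_eq_abs] using abs_softThreshold_le hlam z)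

theorem abs_integral_softThreshold_sub_sq_sub_le {γ : Measure ℝ} [IsProbabilityMeasure γ]
    (hγ : MemLp id 2 γ) (hlam : 0 ≤ lam) (m m₀ : ℝ) {t : ℝ} (ht : 0 < t) :
    |∫ z, (softThreshold lam z - m) ^ 2 ∂γ - (softThreshold lam m₀ - m₀) ^ 2|
      ≤ (1 + t⁻¹) * (2 * ∫ z, (z - m) ^ 2 ∂γ + 8 * (m - m₀) ^ 2) + t * m₀ ^ 2 := by
  set S := softThreshold lam
  set g := S m₀ - m₀
  have hg : g ^ 2 ≤ m₀ ^ 2 := sq_le_sq.2 (abs_softThreshold_sub_self_le hlam m₀)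
  have hSm : Integrable (fun z => (S z - m) ^ 2) γ :=
    ((memLp_two_softThreshold hγ hlam).sub (memLp_const m)).integrable_sq
  have hzm : Integrable (fun z => (z - m) ^ 2) γ := (hγ.sub (memLp_const m)).integrable_sq
  calc |∫ z, (S z - m) ^ 2 ∂γ - g ^ 2| = |∫ z, ((S z - m) ^ 2 - g ^ 2) ∂γ| := by
        rw [integral_sub hSm (integrable_const _), integral_const]; simp
    _ ≤ ∫ z, |(S z - m) ^ 2 - g ^ 2| ∂γ := abs_integral_le_integral_abs
    _ ≤ ∫ z, ((1 + t⁻¹) * (2 * (z - m) ^ 2 + 8 * (m - m₀) ^ 2) + t * m₀ ^ 2) ∂γ := by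
        refine integral_mono (hSm.sub (integrable_const _)).abs
          ((((hzm.const_mul 2).add (integrable_const _)).const_mul _).add (integrable_const _))
          fun z => (abs_sq_sub_sq_le _ _ ht).trans ?_
        gcongr
        exact sq_softThreshold_sub_sub_le hlam z m m₀
    _ = (1 + t⁻¹) * (2 * ∫ z, (z - m) ^ 2 ∂γ + 8 * (m - m₀) ^ 2) + t * m₀ ^ 2 := by
        rw [integral_add _ (integrable_const _), integral_const_mul,
          integral_add _ (integrable_const _), integral_const_mul]
        · simp
        · exact hzm.const_mul 2
        · exact ((hzm.const_mul 2).add (integrable_const _)).const_mul _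

theorem softThresholdMean_sub_sq_add_softThresholdVar (hlam : 0 ≤ lam)
    (m s2 : ℝ) (n : ℕ) :
    (softThresholdMean lam m s2 n - m) ^ 2 + softThresholdVar lam m s2 n
      = ∫ z, (softThreshold lam z - m) ^ 2 ∂gaussianReal m (s2 / n).toNNReal := by
  rw [← sq_integral_sub_add_variance (memLp_two_softThreshold (memLp_id_gaussianReal 2) hlam)]
  rfl

theorem abs_l1Crit_sub_l1CritLimit_le {D : ℕ} (hlam : 0 ≤ lam)
    (ψ ψ₀ s2 : Fin D → ℝ) (n : ℕ) {t : ℝ} (ht : 0 < t) :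
    |l1Crit lam ψ s2 n - l1CritLimit lam ψ₀|
      ≤ (1 + t⁻¹) * ∑ d, (2 * ((s2 d / n).toNNReal : ℝ) + 8 * (ψ d - ψ₀ d) ^ 2)
        + t * ∑ d, ψ₀ d ^ 2 := by
  rw [l1Crit, l1CritLimit, ← sum_sub_distrib, mul_sum, mul_sum, ← sum_add_distrib]
  refine (abs_sum_le_sum_abs _ _).trans (sum_le_sum fun d _ => ?_)
  rw [softThresholdMean_sub_sq_add_softThresholdVar hlam, ← integral_sub_sq_gaussianReal (ψ d)]
  exact abs_integral_softThreshold_sub_sq_sub_le (memLp_id_gaussianReal 2) hlam _ _ ht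

end SoftThreshold

theorem tendsto_iSup_abs_l1Crit_sub_l1CritLimit {D : ℕ} (ψ₀ σ2₀ : Fin D → ℝ) :
    Tendsto (Function.uncurry fun n (x : (Fin D → ℝ) × (Fin D → ℝ)) =>
        ⨆ lam : {lam : ℝ // 0 ≤ lam}, |l1Crit lam.1 x.1 x.2 n - l1CritLimit lam.1 ψ₀|)
      (atTop ×ˢ 𝓝 (ψ₀, σ2₀)) (𝓝 0) := by
  refine tendsto_zero_of_forall_le_mul_add (fun p => Real.iSup_nonneg fun _ => abs_nonneg _) ?_
    fun t ht p => Real.iSup_le (fun lam => abs_l1Crit_sub_l1CritLimit_le lam.2 _ _ _ _ ht)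
      (by positivity)
  have hψ (d : Fin D) : Tendsto (fun p : ℕ × (Fin D → ℝ) × (Fin D → ℝ) => p.2.1 d)
      (atTop ×ˢ 𝓝 (ψ₀, σ2₀)) (𝓝 (ψ₀ d)) :=
    (((continuous_apply d).comp continuous_fst).tendsto (ψ₀, σ2₀)).comp tendsto_snd
  have hvar (d : Fin D) : Tendsto
      (fun p : ℕ × (Fin D → ℝ) × (Fin D → ℝ) => ((p.2.2 d / p.1).toNNReal : ℝ))
      (atTop ×ˢ 𝓝 (ψ₀, σ2₀)) (𝓝 0) := by
    simpa using ((((continuous_apply d).comp continuous_snd).tendsto (ψ₀, σ2₀)).comp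
      tendsto_snd).div_atTop (tendsto_natCast_atTop_atTop.comp tendsto_fst) |>.max_left
  have hsum := tendsto_finsetSum univ fun d _ =>
    ((hvar d).const_mul 2).add ((((hψ d).sub_const (ψ₀ d)).pow 2).const_mul 8)
  simpa using hsum

theorem l1_crit_uniform_convergence_in_probability_general
    {Ω : Type*} [MeasurableSpace Ω] (P : Measure Ω)
    (D : ℕ) (ψ₀ : Fin D → ℝ) (σ2₀ : Fin D → ℝ)
    (ψn : ℕ → Ω → Fin D → ℝ)
    (hψprob : TendstoInProbability P ψn ψ₀)
    (σ2n : ℕ → Ω → Fin D → ℝ)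
    (hσprob : TendstoInProbability P σ2n σ2₀) :
    TendstoInProbability P
      (fun n ω => ⨆ lam : {lam : ℝ // 0 ≤ lam},
        |l1Crit lam.1 (ψn n ω) (σ2n n ω) n - l1CritLimit lam.1 ψ₀|)
      (0 : ℝ) :=
  -- elaborated without the expected type, so that `F` is read off the `uncurry` form
  ((hψprob.prodMk hσprob).comp_tendsto (tendsto_iSup_abs_l1Crit_sub_l1CritLimit ψ₀ σ2₀) :)

/-- uniform convergence in probability of the random L1 tuning criterion to the
limiting criterion: `sup_{λ ≥ 0} |Crit(λ, ψ_n, σ²_n, n) − Crit_∞(λ, ψ₀)| → 0` in probability. -/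
theorem l1_crit_uniform_convergence_in_probability
    {Ω : Type*} [MeasurableSpace Ω] (P : Measure Ω) [IsProbabilityMeasure P]
    (D : ℕ) (hD : 1 ≤ D) (ψ₀ : Fin D → ℝ) (σ2₀ : Fin D → ℝ) (hσ2₀ : ∀ d, 0 < σ2₀ d)
    (ψn : ℕ → Ω → Fin D → ℝ) (hψmeas : ∀ n, Measurable (ψn n))
    (hψprob : TendstoInProbability P ψn ψ₀)
    (σ2n : ℕ → Ω → Fin D → ℝ) (hσmeas : ∀ n, Measurable (σ2n n))
    (hσpos : ∀ n ω d, 0 < σ2n n ω d)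
    (hσprob : TendstoInProbability P σ2n σ2₀) :
    TendstoInProbability P
      (fun n ω => ⨆ lam : {lam : ℝ // 0 ≤ lam},
        |l1Crit lam.1 (ψn n ω) (σ2n n ω) n - l1CritLimit lam.1 ψ₀|)
      (0 : ℝ) :=
  l1_crit_uniform_convergence_in_probability_general P D ψ₀ σ2₀ ψn hψprob σ2n hσprob
end

section
/- Let μ ∈ ℝ, σ² > 0 and λ ≥ 0, and let Z be a random variable with law N(μ, σ²). Then E[S_λ(Z)] = μ − μ(Φ_{μ,σ²}(λ) − Φ_{μ,σ²}(−λ)) + λ(Φ_{μ,σ²}(λ) + Φ_{μ,σ²}(−λ) − 1) + σ²(φ_{μ,σ²}(λ) − φ_{μ,σ²}(−λ)). -/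
/-!
Split `S_λ(x) = (x - λ) 𝟙{x > λ} + (x + λ) 𝟙{x ≤ -λ}`. Each piece is a truncated first moment of
`N(μ, σ²)`. The Gaussian density satisfies `(x - μ) φ(x) = -σ² φ'(x)`, so the centred truncated
moments are boundary terms: `∫_{x > t} (x - μ) φ = σ² φ(t)` and `∫_{x ≤ t} (x - μ) φ = -σ² φ(t)`.
What remains of each piece is a constant times a tail probability, `1 - Φ(λ)` or `Φ(-λ)`.
-/

open scoped NNReal
open MeasureTheory ProbabilityTheory Real Set Filter

lemma softThreshold_eq_indicator_add_indicator {lam : ℝ} (hlam : 0 ≤ lam) (x : ℝ) :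
    softThreshold lam x =
      (Ioi lam).indicator (· - lam) x + (Iic (-lam)).indicator (· + lam) x := by
  unfold softThreshold
  simp only [indicator_apply, mem_Ioi, mem_Iic]
  split_ifs <;> linarith

lemma integral_softThreshold {ν : Measure ℝ} [IsFiniteMeasure ν] (hν : Integrable id ν)
    {lam : ℝ} (hlam : 0 ≤ lam) :
    ∫ x, softThreshold lam x ∂ν =
      ∫ x in Ioi lam, (x - lam) ∂ν + ∫ x in Iic (-lam), (x + lam) ∂ν := by
  have hsub : Integrable (· - lam) ν := hν.sub (integrable_const lam)
  have hadd : Integrable (· + lam) ν := hν.add (integrable_const lam)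
  simp_rw [softThreshold_eq_indicator_add_indicator hlam]
  rw [integral_add (hsub.indicator measurableSet_Ioi) (hadd.indicator measurableSet_Iic),
    integral_indicator measurableSet_Ioi, integral_indicator measurableSet_Iic]

section GaussianPartialMoments

variable (μ : ℝ) {v : ℝ≥0}

lemma hasDerivAt_neg_mul_gaussianPDFReal (hv : v ≠ 0) (x : ℝ) :
    HasDerivAt (fun y => -(v : ℝ) * gaussianPDFReal μ v y)
      ((x - μ) * gaussianPDFReal μ v x) x := by
  have hexponent : HasDerivAt (fun y : ℝ => -(y - μ) ^ 2 / (2 * v))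
      (-(2 * (x - μ)) / (2 * v)) x := by
    simpa [neg_div] using
      ((((hasDerivAt_id x).sub_const μ).fun_pow 2).div_const (2 * (v : ℝ))).fun_neg
  simp only [gaussianPDFReal_def]
  refine ((hexponent.exp.const_mul (√(2 * π * v))⁻¹).const_mul (-(v : ℝ))).congr_deriv ?_
  field_simp

lemma integrable_sub_mul_gaussianPDFReal (hv : v ≠ 0) :
    Integrable (fun x => (x - μ) * gaussianPDFReal μ v x) := by
  have hb : (0 : ℝ) < (2 * (v : ℝ))⁻¹ := by positivity
  refine (((integrable_mul_exp_neg_mul_sq hb).comp_sub_right μ).const_mul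
    (√(2 * π * v))⁻¹).congr (Eventually.of_forall fun x => ?_)
  simp only [gaussianPDFReal_def]
  rw [show -(x - μ) ^ 2 / (2 * v) = -(2 * (v : ℝ))⁻¹ * (x - μ) ^ 2 by field_simp]
  ring

lemma setIntegral_gaussianReal_eq_setIntegral_mul (hv : v ≠ 0) {s : Set ℝ}
    (hs : MeasurableSet s) (f : ℝ → ℝ) :
    ∫ x in s, f x ∂gaussianReal μ v = ∫ x in s, f x * gaussianPDFReal μ v x := by
  rw [← integral_indicator hs, integral_gaussianReal_eq_integral_smul hv,
    ← integral_indicator hs]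
  congr with x
  by_cases hx : x ∈ s <;> simp [hx, mul_comm]

lemma setIntegral_Ioi_sub_mean_gaussianReal (hv : v ≠ 0) (t : ℝ) :
    ∫ x in Ioi t, (x - μ) ∂gaussianReal μ v = v * gaussianPDFReal μ v t := by
  have hderiv := hasDerivAt_neg_mul_gaussianPDFReal μ hv
  have hint := (integrable_sub_mul_gaussianPDFReal μ hv).integrableOn (s := Ioi t)
  have hlim := tendsto_zero_of_hasDerivAt_of_integrableOn_Ioi (fun x _ => hderiv x) hint
    ((integrable_gaussianPDFReal μ v).const_mul _).integrableOn
  rw [setIntegral_gaussianReal_eq_setIntegral_mul μ hv measurableSet_Ioi]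
  rw [integral_Ioi_of_hasDerivAt_of_tendsto' (fun x _ => hderiv x) hint hlim]
  ring

lemma setIntegral_Iic_sub_mean_gaussianReal (hv : v ≠ 0) (t : ℝ) :
    ∫ x in Iic t, (x - μ) ∂gaussianReal μ v = -(v * gaussianPDFReal μ v t) := by
  have hderiv := hasDerivAt_neg_mul_gaussianPDFReal μ hv
  have hint := (integrable_sub_mul_gaussianPDFReal μ hv).integrableOn (s := Iic t)
  have hlim := tendsto_zero_of_hasDerivAt_of_integrableOn_Iic (fun x _ => hderiv x) hint
    ((integrable_gaussianPDFReal μ v).const_mul _).integrableOn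
  rw [setIntegral_gaussianReal_eq_setIntegral_mul μ hv measurableSet_Iic]
  rw [integral_Iic_of_hasDerivAt_of_tendsto' (fun x _ => hderiv x) hint hlim]
  ring

lemma setIntegral_sub_gaussianReal {s : Set ℝ} (c : ℝ) :
    ∫ x in s, (x - c) ∂gaussianReal μ v =
      ∫ x in s, (x - μ) ∂gaussianReal μ v + (μ - c) * (gaussianReal μ v).real s := by
  have hcentered : Integrable (· - μ) (gaussianReal μ v) :=
    ((memLp_id_gaussianReal 1).integrable le_rfl).sub (integrable_const μ)
  rw [show (fun x => x - c) = fun x => (x - μ) + (μ - c) by ext; ring,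
    integral_add hcentered.integrableOn (integrable_const _).integrableOn, setIntegral_const,
    smul_eq_mul, mul_comm]

lemma setIntegral_Ioi_sub_gaussianReal (hv : v ≠ 0) (t c : ℝ) :
    ∫ x in Ioi t, (x - c) ∂gaussianReal μ v =
      v * gaussianPDFReal μ v t + (μ - c) * (1 - cdf (gaussianReal μ v) t) := by
  rw [setIntegral_sub_gaussianReal, setIntegral_Ioi_sub_mean_gaussianReal μ hv, ← compl_Iic,
    probReal_compl_eq_one_sub measurableSet_Iic, cdf_eq_real]

lemma setIntegral_Iic_sub_gaussianReal (hv : v ≠ 0) (t c : ℝ) :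
    ∫ x in Iic t, (x - c) ∂gaussianReal μ v =
      -(v * gaussianPDFReal μ v t) + (μ - c) * cdf (gaussianReal μ v) t := by
  rw [setIntegral_sub_gaussianReal, setIntegral_Iic_sub_mean_gaussianReal μ hv, cdf_eq_real]

end GaussianPartialMoments

/-- mean of the soft-thresholded Gaussian. For `Z ~ N(μ, σ²)` with `σ² > 0` and
`λ ≥ 0`:
`E[S_λ(Z)] = μ − μ(Φ(λ) − Φ(−λ)) + λ(Φ(λ) + Φ(−λ) − 1) + σ²(φ(λ) − φ(−λ))`,
where `Φ = Φ_{μ,σ²}` and `φ = φ_{μ,σ²}` are the CDF and density of `N(μ, σ²)`. -/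
theorem softThreshold_gaussian_mean (μ s2 lam : ℝ) (hs2 : 0 < s2) (hlam : 0 ≤ lam) :
    ∫ z, softThreshold lam z ∂(gaussianReal μ s2.toNNReal) =
      μ - μ * (cdf (gaussianReal μ s2.toNNReal) lam - cdf (gaussianReal μ s2.toNNReal) (-lam))
        + lam * (cdf (gaussianReal μ s2.toNNReal) lam
          + cdf (gaussianReal μ s2.toNNReal) (-lam) - 1)
        + s2 * (gaussianPDFReal μ s2.toNNReal lam - gaussianPDFReal μ s2.toNNReal (-lam)) := by
  have hv : s2.toNNReal ≠ 0 := (Real.toNNReal_pos.mpr hs2).ne'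
  have hupper := setIntegral_Ioi_sub_gaussianReal μ hv lam lam
  have hlower := setIntegral_Iic_sub_gaussianReal μ hv (-lam) (-lam)
  simp only [sub_neg_eq_add] at hlower
  rw [integral_softThreshold ((memLp_id_gaussianReal 1).integrable le_rfl) hlam, hupper, hlower,
    Real.coe_toNNReal _ hs2.le]
  ring
end

section
/- Let μ ∈ ℝ, σ² > 0 and λ ≥ 0, and let Z be a random variable with law N(μ, σ²). Then Var(S_λ(Z)) = 2(μ² + σ² + λ²) − ((μ + λ)² + σ²)(1 − Φ_{μ,σ²}(−λ)) − ((μ − λ)² + σ²)Φ_{μ,σ²}(λ) − (μ + λ)σ²φ_{μ,σ²}(−λ) + (μ − λ)σ²φ_{μ,σ²}(λ) − (E[S_λ(Z)])², where Var(S_λ(Z)) = E[S_λ(Z)²] − (E[S_λ(Z)])². -/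
/-!
Since `λ ≥ 0`, `S_λ(z)² = (z + λ)² 𝟙{z ≤ -λ} + (z - λ)² 𝟙{z > λ}`, so only truncated second
moments of `N(μ, v)` on half-lines are needed. Gaussian integration by parts gives them in closed
form: as `φ' = -(z - μ) / v * φ`, the function `v (2c - μ - z) φ(z)` is a primitive of
`((z - c)² - (μ - c)² - v) φ(z)`, and it vanishes at `±∞`.
-/

open MeasureTheory ProbabilityTheory
open Set
open scoped NNReal

namespace ProbabilityTheory

variable {μ : ℝ} {v : ℝ≥0}

lemma hasDerivAt_gaussianPDFReal (x : ℝ) :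
    HasDerivAt (gaussianPDFReal μ v) (-(x - μ) / v * gaussianPDFReal μ v x) x := by
  have hsq : HasDerivAt (fun x => -(x - μ) ^ 2 / (2 * (v : ℝ))) (-(x - μ) / v) x := by
    refine ((((hasDerivAt_id' x).sub_const μ).fun_pow 2).fun_neg.div_const _).congr_deriv ?_
    rw [← mul_div_mul_left _ (v : ℝ) two_ne_zero]
    ring
  rw [gaussianPDFReal_def]
  exact (hsq.exp.const_mul _).congr_deriv (by ring)

lemma integrable_gaussianReal_iff (hv : v ≠ 0) {f : ℝ → ℝ} :
    Integrable f (gaussianReal μ v) ↔ Integrable (fun x => gaussianPDFReal μ v x * f x) := by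
  rw [gaussianReal_of_var_ne_zero _ hv, gaussianPDF_def, integrable_withDensity_iff_integrable_smul'
    (by fun_prop) (ae_of_all _ fun _ => ENNReal.ofReal_lt_top)]
  simp [ENNReal.toReal_ofReal (gaussianPDFReal_nonneg μ v _)]

lemma setIntegral_gaussianReal_eq_setIntegral_mul (hv : v ≠ 0) (f : ℝ → ℝ) {s : Set ℝ}
    (hs : MeasurableSet s) :
    ∫ x in s, f x ∂gaussianReal μ v = ∫ x in s, gaussianPDFReal μ v x * f x := by
  rw [← integral_indicator hs, integral_gaussianReal_eq_integral_smul hv, ← integral_indicator hs]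
  congr with x
  by_cases hx : x ∈ s <;> simp [hx]

lemma integrable_sub_sq_gaussianReal (c : ℝ) :
    Integrable (fun x => (x - c) ^ 2) (gaussianReal μ v) :=
  ((memLp_id_gaussianReal 2).sub (memLp_const c)).integrable_sq

lemma integrable_id_gaussianReal : Integrable id (gaussianReal μ v) :=
  memLp_one_iff_integrable.1 (by exact_mod_cast memLp_id_gaussianReal 1)

lemma hasDerivAt_gaussianPDFReal_primitive (hv : v ≠ 0) (c x : ℝ) :
    HasDerivAt (fun z => v * (2 * c - μ - z) * gaussianPDFReal μ v z)
      (gaussianPDFReal μ v x * ((x - c) ^ 2 - ((μ - c) ^ 2 + v))) x := by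
  have hv' : (v : ℝ) ≠ 0 := by exact_mod_cast hv
  refine ((((hasDerivAt_id' x).const_sub (2 * c - μ)).const_mul (v : ℝ)).mul
    (hasDerivAt_gaussianPDFReal x)).congr_deriv ?_
  field_simp
  ring

lemma integrable_gaussianPDFReal_primitive (hv : v ≠ 0) (c : ℝ) :
    Integrable (fun z => v * (2 * c - μ - z) * gaussianPDFReal μ v z) := by
  have h := ((integrable_const (2 * c - μ)).sub
    (integrable_id_gaussianReal (μ := μ) (v := v))).const_mul (v : ℝ)
  refine ((integrable_gaussianReal_iff hv).1 h).congr (ae_of_all _ fun z => ?_)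
  simp only [Pi.sub_apply, id_eq]
  ring

lemma integrable_gaussianPDFReal_primitive_deriv (hv : v ≠ 0) (c : ℝ) :
    Integrable (fun x => gaussianPDFReal μ v x * ((x - c) ^ 2 - ((μ - c) ^ 2 + v))) :=
  (integrable_gaussianReal_iff hv).1 ((integrable_sub_sq_gaussianReal c).sub (integrable_const _))

lemma setIntegral_Iic_sub_sq_gaussianReal (hv : v ≠ 0) (c : ℝ) :
    ∫ x in Iic c, (x - c) ^ 2 ∂gaussianReal μ v
      = ((μ - c) ^ 2 + v) * cdf (gaussianReal μ v) c - v * (μ - c) * gaussianPDFReal μ v c := by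
  have hderiv := fun x (_ : x ∈ Iic c) => hasDerivAt_gaussianPDFReal_primitive (μ := μ) hv c x
  have hint := (integrable_gaussianPDFReal_primitive_deriv (μ := μ) hv c).integrableOn (s := Iic c)
  have hftc : ∫ x in Iic c, ((x - c) ^ 2 - ((μ - c) ^ 2 + v)) ∂gaussianReal μ v
      = v * (c - μ) * gaussianPDFReal μ v c := by
    rw [setIntegral_gaussianReal_eq_setIntegral_mul hv _ measurableSet_Iic,
      integral_Iic_of_hasDerivAt_of_tendsto' hderiv hint
        (tendsto_zero_of_hasDerivAt_of_integrableOn_Iic hderiv hint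
          (integrable_gaussianPDFReal_primitive hv c).integrableOn)]
    ring
  rw [integral_sub (integrable_sub_sq_gaussianReal c).integrableOn (integrable_const _),
    setIntegral_const, ← cdf_eq_real, smul_eq_mul] at hftc
  linarith

lemma setIntegral_Ioi_sub_sq_gaussianReal (hv : v ≠ 0) (c : ℝ) :
    ∫ x in Ioi c, (x - c) ^ 2 ∂gaussianReal μ v
      = ((μ - c) ^ 2 + v) * (1 - cdf (gaussianReal μ v) c)
        + v * (μ - c) * gaussianPDFReal μ v c := by
  have hderiv := fun x (_ : x ∈ Ici c) => hasDerivAt_gaussianPDFReal_primitive (μ := μ) hv c x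
  have hint := (integrable_gaussianPDFReal_primitive_deriv (μ := μ) hv c).integrableOn (s := Ioi c)
  have hftc : ∫ x in Ioi c, ((x - c) ^ 2 - ((μ - c) ^ 2 + v)) ∂gaussianReal μ v
      = v * (μ - c) * gaussianPDFReal μ v c := by
    rw [setIntegral_gaussianReal_eq_setIntegral_mul hv _ measurableSet_Ioi,
      integral_Ioi_of_hasDerivAt_of_tendsto' hderiv hint
        (tendsto_zero_of_hasDerivAt_of_integrableOn_Ioi
          (fun x hx => hderiv x (Ioi_subset_Ici_self hx)) hint
          (integrable_gaussianPDFReal_primitive hv c).integrableOn)]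
    ring
  have hIoi : (gaussianReal μ v).real (Ioi c) = 1 - cdf (gaussianReal μ v) c := by
    rw [← compl_Iic, measureReal_compl measurableSet_Iic, probReal_univ, cdf_eq_real]
  rw [integral_sub (integrable_sub_sq_gaussianReal c).integrableOn (integrable_const _),
    setIntegral_const, hIoi, smul_eq_mul] at hftc
  linarith

end ProbabilityTheory

lemma softThreshold_sq {lam : ℝ} (hlam : 0 ≤ lam) (x : ℝ) :
    softThreshold lam x ^ 2
      = (Iic (-lam)).indicator (fun x => (x + lam) ^ 2) x
        + (Ioi lam).indicator (fun x => (x - lam) ^ 2) x := by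
  unfold softThreshold
  rcases lt_or_ge x (-lam) with hlow | hlow
  · simp [hlow, hlow.le, show ¬ lam < x by linarith]
  rcases le_or_gt x lam with hmid | hup
  · have hboundary : (Iic (-lam)).indicator (fun x => (x + lam) ^ 2) x = 0 :=
      indicator_apply_eq_zero.2 fun hx => by simp [le_antisymm hx hlow]
    simp [not_lt.2 hlow, hmid, not_lt.2 hmid, hboundary]
  · simp [not_lt.2 hlow, not_le.2 hup, hup, show ¬ x ≤ -lam by linarith]

lemma integral_softThreshold_sq {P : Measure ℝ} {lam : ℝ} (hlam : 0 ≤ lam)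
    (hlow : Integrable (fun x => (x + lam) ^ 2) P) (hup : Integrable (fun x => (x - lam) ^ 2) P) :
    ∫ x, softThreshold lam x ^ 2 ∂P
      = ∫ x in Iic (-lam), (x + lam) ^ 2 ∂P + ∫ x in Ioi lam, (x - lam) ^ 2 ∂P := by
  rw [integral_congr_ae (ae_of_all _ (softThreshold_sq hlam)),
    integral_add (hlow.indicator measurableSet_Iic) (hup.indicator measurableSet_Ioi),
    integral_indicator measurableSet_Iic, integral_indicator measurableSet_Ioi]

/-- variance of the soft-thresholded Gaussian. For `Z ~ N(μ, σ²)` with `σ² > 0`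
and `λ ≥ 0`, with `Var(S_λ(Z)) = E[S_λ(Z)²] − (E[S_λ(Z)])²`:
`Var(S_λ(Z)) = 2(μ² + σ² + λ²) − ((μ + λ)² + σ²)(1 − Φ(−λ)) − ((μ − λ)² + σ²)Φ(λ)
  − (μ + λ)σ²φ(−λ) + (μ − λ)σ²φ(λ) − (E[S_λ(Z)])²`,
where `Φ = Φ_{μ,σ²}` and `φ = φ_{μ,σ²}` are the CDF and density of `N(μ, σ²)`. -/
theorem softThreshold_gaussian_variance (μ s2 lam : ℝ) (hs2 : 0 < s2) (hlam : 0 ≤ lam) :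
    (∫ z, softThreshold lam z ^ 2 ∂(gaussianReal μ s2.toNNReal)) -
        (∫ z, softThreshold lam z ∂(gaussianReal μ s2.toNNReal)) ^ 2 =
      2 * (μ ^ 2 + s2 + lam ^ 2)
        - ((μ + lam) ^ 2 + s2) * (1 - cdf (gaussianReal μ s2.toNNReal) (-lam))
        - ((μ - lam) ^ 2 + s2) * cdf (gaussianReal μ s2.toNNReal) lam
        - (μ + lam) * s2 * gaussianPDFReal μ s2.toNNReal (-lam)
        + (μ - lam) * s2 * gaussianPDFReal μ s2.toNNReal lam
        - (∫ z, softThreshold lam z ∂(gaussianReal μ s2.toNNReal)) ^ 2 := by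
  have hv : s2.toNNReal ≠ 0 := by simpa using hs2
  have hlow := setIntegral_Iic_sub_sq_gaussianReal (μ := μ) hv (-lam)
  have hint := integrable_sub_sq_gaussianReal (μ := μ) (v := s2.toNNReal) (-lam)
  simp only [sub_neg_eq_add] at hlow hint
  rw [integral_softThreshold_sq hlam hint (integrable_sub_sq_gaussianReal lam), hlow,
    setIntegral_Ioi_sub_sq_gaussianReal hv lam, Real.coe_toNNReal _ hs2.le]
  ring
end
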